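/- Let (K, v) be a separably closed valued field of characteristic p > 0, let d ≥ 1, and let a_0, …, a_d ∈ K with a_0 ≠ 0 and a_d ≠ 0. Then for every n ∈ K with n ≠ 0, the set S = {v(m) : m ∈ K, ∑_{i=0}^{d} a_i·m^{p^i} = n} is nonempty and has at most 2^d elements. -/

import Mathlib

/-- A valuation on a field `K` with values in the linearly ordered abelian group `Γ`
(together with `∞ = ⊤`), surjective onto `Γ`, i.e. `Γ = v(K^×)`. -/
structure ValuedFieldAux (K : Type*) [Field K] (Γ : Type*)
    [AddCommGroup Γ] [LinearOrder Γ] [IsOrderedAddMonoid Γ] where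
  v : K → WithTop Γ
  v_eq_top_iff : ∀ x : K, v x = ⊤ ↔ x = 0
  v_mul : ∀ x y : K, v (x * y) = v x + v y
  v_add : ∀ x y : K, min (v x) (v y) ≤ v (x + y)
  v_surj : ∀ γ : Γ, ∃ x : K, v x = (γ : WithTop Γ)

/-! The map `ψ x = ∑ aᵢ x^(pⁱ)` is additive, and `ψ - n` has derivative `a₀ ≠ 0`, so it is a
separable polynomial of degree at most `p^d`: it has a root in `K`, and its roots form a coset of
the finite `𝔽_p`-space `ker ψ`, of dimension at most `d`. Since nonzero elements of `𝔽_p` have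
valuation `0`, elements of `K` with pairwise distinct valuations are `𝔽_p`-linearly independent,
so the nonzero elements of `ker ψ` take at most `d` valuations. If `m₀` is a solution of maximal
valuation, any solution `m` with `v m < v m₀` has `v m = v (m - m₀)` with `m - m₀ ∈ ker ψ`;
hence the solutions take at most `d + 1 ≤ 2^d` valuations. -/

open Polynomial Finset

namespace ValuedFieldAux

variable {K : Type*} [Field K] {Γ : Type*} [AddCommGroup Γ] [LinearOrder Γ] [IsOrderedAddMonoid Γ]
  (vf : ValuedFieldAux K Γ)

lemma v_zero : vf.v 0 = ⊤ := (vf.v_eq_top_iff 0).2 rfl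

lemma v_ne_top {x : K} (hx : x ≠ 0) : vf.v x ≠ ⊤ := (vf.v_eq_top_iff x).not.2 hx

lemma v_one : vf.v 1 = 0 := by
  obtain ⟨γ, hγ⟩ := WithTop.ne_top_iff_exists.1 (vf.v_ne_top one_ne_zero)
  have h := vf.v_mul 1 1
  rw [one_mul, ← hγ, ← WithTop.coe_add, WithTop.coe_inj, left_eq_add] at h
  rw [← hγ, h, WithTop.coe_zero]

def toAddValuation : AddValuation K (WithTop Γ) :=
  AddValuation.of vf.v vf.v_zero vf.v_one vf.v_add vf.v_mul

@[simp]
lemma toAddValuation_apply (x : K) : vf.toAddValuation x = vf.v x := rfl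

lemma v_eq_zero_of_pow_eq_one {x : K} {n : ℕ} (hn : n ≠ 0) (hx : x ^ n = 1) : vf.v x = 0 := by
  have hx0 : x ≠ 0 := by rintro rfl; simp [zero_pow hn] at hx
  obtain ⟨γ, hγ⟩ := WithTop.ne_top_iff_exists.1 (vf.v_ne_top hx0)
  have h := vf.toAddValuation.map_pow x n
  rw [hx, toAddValuation_apply, toAddValuation_apply, v_one, ← hγ, ← WithTop.coe_nsmul,
    ← WithTop.coe_zero, WithTop.coe_inj] at h
  rw [← hγ, (nsmul_eq_zero_iff_right hn).1 h.symm, WithTop.coe_zero]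

lemma v_algebraMap_eq_zero {k : Type*} [Field k] [Finite k] [Algebra k K] {c : k} (hc : c ≠ 0) :
    vf.v (algebraMap k K c) = 0 := by
  have := Fintype.ofFinite k
  refine vf.v_eq_zero_of_pow_eq_one (n := Fintype.card k - 1) ?_ ?_
  · have := Fintype.one_lt_card (α := k)
    omega
  · rw [← map_pow, FiniteField.pow_card_sub_one_eq_one c hc, map_one]

lemma v_sum_eq_of_lt {ι : Type*} {s : Finset ι} {f : ι → K} {j : ι} (hj : j ∈ s) (hfj : f j ≠ 0)
    (h : ∀ i ∈ s, i ≠ j → vf.v (f j) < vf.v (f i)) : vf.v (∑ i ∈ s, f i) = vf.v (f j) := by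
  classical
  rw [← add_sum_erase s f hj]
  refine vf.toAddValuation.map_add_eq_of_lt_left (vf.toAddValuation.map_lt_sum (vf.v_ne_top hfj) ?_)
  exact fun i hi => h i (mem_of_mem_erase hi) (ne_of_mem_erase hi)

lemma eq_zero_of_sum_eq_zero {ι : Type*} {s : Finset ι} {f : ι → K}
    (hinj : Set.InjOn (vf.v ∘ f) {i | i ∈ s ∧ f i ≠ 0}) (hsum : ∑ i ∈ s, f i = 0) :
    ∀ i ∈ s, f i = 0 := by
  classical
  by_contra! hne
  obtain ⟨j, hj, hmin⟩ :=
    (s.filter (f · ≠ 0)).exists_min_image (vf.v ∘ f) (filter_nonempty_iff.2 hne)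
  have hj' := mem_filter.1 hj
  have := vf.v_sum_eq_of_lt hj hj'.2 fun i hi hij =>
    (hmin i hi).lt_of_ne fun h => hij (hinj (mem_filter.1 hi) hj' h.symm)
  rw [sum_filter_ne_zero, hsum, v_zero] at this
  exact vf.v_ne_top hj'.2 this.symm

variable {k : Type*} [Field k] [Finite k] [Algebra k K]

lemma linearIndependent_of_injective_v {ι : Type*} {w : ι → K} (hw : ∀ i, w i ≠ 0)
    (hinj : Function.Injective (vf.v ∘ w)) : LinearIndependent k w := by
  rw [linearIndependent_iff']
  intro s g hsum i hi
  have hv : ∀ i, g i ≠ 0 → vf.v (g i • w i) = vf.v (w i) := fun i hgi => by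
    rw [Algebra.smul_def, vf.v_mul, vf.v_algebraMap_eq_zero hgi, zero_add]
  have hterms := vf.eq_zero_of_sum_eq_zero (f := fun i => g i • w i) ?_ hsum i hi
  · exact (smul_eq_zero.1 hterms).resolve_right (hw i)
  · rintro i ⟨-, hi⟩ i' ⟨-, hi'⟩ h
    refine hinj ?_
    simpa only [Function.comp_apply, hv i (left_ne_zero_of_smul hi),
      hv i' (left_ne_zero_of_smul hi')] using h

lemma ncard_image_v_le_finrank (W : Submodule k K) [Finite W] :
    (vf.v '' ((W : Set K) \ {0})).ncard ≤ Module.finrank k W := by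
  set V := vf.v '' ((W : Set K) \ {0})
  have hV : V.Finite := (Set.toFinite (W : Set K)).sdiff.image _
  have : Fintype V := hV.fintype
  choose w hwW hwv using fun γ : V => γ.2
  have hli : LinearIndependent k (fun γ => (⟨w γ, hwW γ |>.1⟩ : W)) := by
    refine LinearIndependent.of_comp W.subtype (vf.linearIndependent_of_injective_v
      (fun γ => (hwW γ).2) fun γ γ' h => Subtype.ext ?_)
    simpa [hwv] using h
  rw [← Nat.card_coe_set_eq, Nat.card_eq_fintype_card]
  exact hli.fintype_card_le_finrank

lemma ncard_image_v_le_of_natCard_le {p : ℕ} [CharP K p] (hp : p.Prime) (W : AddSubgroup K)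
    [Finite W] {d : ℕ} (hW : Nat.card W ≤ p ^ d) : (vf.v '' ((W : Set K) \ {0})).ncard ≤ d := by
  have := Fact.mk hp
  let := ZMod.algebra K p
  let W' := AddSubgroup.toZModSubmodule p W
  have : Finite W' := ‹Finite W›
  refine (vf.ncard_image_v_le_finrank W').trans ?_
  have hcard : Nat.card W' = p ^ Module.finrank (ZMod p) W' := by
    rw [Module.natCard_eq_pow_finrank (K := ZMod p), Nat.card_zmod]
  exact (Nat.pow_le_pow_iff_right hp.one_lt).1 (hcard ▸ hW)

lemma image_v_subset_insert {S W : Set K} {m₀ : K} (hW : ∀ m ∈ S, m - m₀ ∈ W)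
    (hmax : ∀ m ∈ S, vf.v m ≤ vf.v m₀) :
    vf.v '' S ⊆ insert (vf.v m₀) (vf.v '' (W \ {0})) := by
  rintro _ ⟨m, hm, rfl⟩
  rcases (hmax m hm).lt_or_eq with hlt | heq
  · refine Or.inr ⟨m - m₀, ⟨hW m hm, ?_⟩, vf.toAddValuation.map_sub_eq_of_lt_left hlt⟩
    rintro h
    rw [Set.mem_singleton_iff, sub_eq_zero] at h
    exact hlt.ne (congrArg vf.v h)
  · exact Or.inl heq

lemma ncard_image_v_le_of_sub_mem {S W : Set K} (hS : S.Finite) (hW : W.Finite)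
    (hsub : ∀ m ∈ S, ∀ m' ∈ S, m - m' ∈ W) :
    (vf.v '' S).ncard ≤ (vf.v '' (W \ {0})).ncard + 1 := by
  rcases S.eq_empty_or_nonempty with rfl | hne
  · simp
  obtain ⟨m₀, hm₀, hmax⟩ := S.exists_max_image vf.v hS hne
  calc (vf.v '' S).ncard ≤ (insert (vf.v m₀) (vf.v '' (W \ {0}))).ncard :=
        Set.ncard_le_ncard (vf.image_v_subset_insert (fun m hm => hsub m hm m₀ hm₀) hmax)
          ((hW.sdiff.image _).insert _)
    _ ≤ (vf.v '' (W \ {0})).ncard + 1 := Set.ncard_insert_le _ _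

end ValuedFieldAux

namespace Polynomial

variable {K : Type*} [Field K]

lemma setOf_eval_eq_eq_roots_sub_C [DecidableEq K] {Q : K[X]} (hQ : 0 < Q.natDegree) (c : K) :
    {x | Q.eval x = c} = ((Q - C c).roots.toFinset : Set K) := by
  ext x
  simp [mem_roots_sub_C (natDegree_pos_iff_degree_pos.1 hQ)]

lemma finite_setOf_eval_eq {Q : K[X]} (hQ : 0 < Q.natDegree) (c : K) :
    {x | Q.eval x = c}.Finite := by
  classical
  rw [setOf_eval_eq_eq_roots_sub_C hQ]
  exact Finset.finite_toSet _

lemma ncard_setOf_eval_eq_le {Q : K[X]} (hQ : 0 < Q.natDegree) (c : K) :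
    {x | Q.eval x = c}.ncard ≤ Q.natDegree := by
  classical
  rw [setOf_eval_eq_eq_roots_sub_C hQ, Set.ncard_coe_finset]
  exact (Multiset.toFinset_card_le _).trans
    (card_roots_sub_C' (natDegree_pos_iff_degree_pos.1 hQ))

lemma natDegree_pos_of_derivative_ne_zero {Q : K[X]} (hQ : derivative Q ≠ 0) : 0 < Q.natDegree :=
  Nat.pos_of_ne_zero (mt derivative_of_natDegree_zero hQ)

lemma exists_eval_eq_of_derivative_eq_C [IsSepClosed K] {Q : K[X]} {c : K}
    (hQ : derivative Q = C c) (hc : c ≠ 0) (n : K) : ∃ x, Q.eval x = n := by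
  have hsep : (Q - C n).Separable := by
    rw [separable_def, derivative_sub, derivative_C, sub_zero, hQ]
    exact ⟨0, C c⁻¹, by rw [zero_mul, zero_add, ← C_mul, inv_mul_cancel₀ hc, C_1]⟩
  have hpos : 0 < Q.degree := natDegree_pos_iff_degree_pos.1
    (natDegree_pos_of_derivative_ne_zero (by rwa [hQ, Ne, C_eq_zero]))
  have hdeg : (Q - C n).degree ≠ 0 := by
    rw [degree_sub_C hpos]
    exact hpos.ne'
  obtain ⟨x, hx⟩ := IsSepClosed.exists_root (Q - C n) hdeg hsep
  exact ⟨x, by simpa [sub_eq_zero] using hx⟩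

variable (p : ℕ) (a : ℕ → K) (d : ℕ)

noncomputable def additivePolynomial : K[X] := ∑ i ∈ range (d + 1), C (a i) * X ^ p ^ i

@[simp]
lemma eval_additivePolynomial (x : K) :
    (additivePolynomial p a d).eval x = ∑ i ∈ range (d + 1), a i * x ^ p ^ i := by
  simp [additivePolynomial, eval_finsetSum]

lemma derivative_additivePolynomial [CharP K p] :
    derivative (additivePolynomial p a d) = C (a 0) := by
  rw [additivePolynomial, derivative_sum, sum_range_succ', sum_eq_zero]
  · simp
  · intro i _
    rw [derivative_C_mul_X_pow, Nat.cast_pow, CharP.cast_eq_zero, zero_pow (Nat.succ_ne_zero i),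
      mul_zero, C_0, zero_mul]

lemma natDegree_additivePolynomial_le (hp : p ≠ 0) : (additivePolynomial p a d).natDegree ≤ p ^ d :=
  natDegree_sum_le_of_forall_le _ _ fun _ hi => (natDegree_C_mul_X_pow_le _ _).trans
    (Nat.pow_le_pow_right (Nat.pos_of_ne_zero hp) (Nat.lt_succ_iff.1 (mem_range.1 hi)))

noncomputable def additivePolynomialHom [ExpChar K p] : K →+ K :=
  AddMonoidHom.mk' (additivePolynomial p a d).eval fun x y => by
    simp only [eval_additivePolynomial, add_pow_expChar_pow, mul_add, sum_add_distrib]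

end Polynomial

theorem stmt_12_general (p : ℕ) (hp : p.Prime) (K : Type*) [Field K] [CharP K p] [IsSepClosed K]
    (Γ : Type*) [AddCommGroup Γ] [LinearOrder Γ] [IsOrderedAddMonoid Γ] (vf : ValuedFieldAux K Γ)
    (d : ℕ) (a : ℕ → K) (ha0 : a 0 ≠ 0)
    (n : K) :
    (vf.v '' {m : K | ∑ i ∈ Finset.range (d + 1), a i * m ^ (p ^ i) = n}).Nonempty ∧
    (vf.v '' {m : K | ∑ i ∈ Finset.range (d + 1), a i * m ^ (p ^ i) = n}).Finite ∧
    (vf.v '' {m : K | ∑ i ∈ Finset.range (d + 1), a i * m ^ (p ^ i) = n}).ncard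
      ≤ 2 ^ d := by
  have := Fact.mk hp
  set A := additivePolynomial p a d
  have hS : {m : K | ∑ i ∈ range (d + 1), a i * m ^ (p ^ i) = n} = {m | A.eval m = n} := by
    simp [A]
  rw [hS]
  have hA' : derivative A = C (a 0) := derivative_additivePolynomial p a d
  have hA : 0 < A.natDegree := natDegree_pos_of_derivative_ne_zero (by rwa [hA', Ne, C_eq_zero])
  have hfin := finite_setOf_eval_eq hA n
  obtain ⟨m, hm⟩ := exists_eval_eq_of_derivative_eq_C hA' ha0 n
  refine ⟨⟨_, Set.mem_image_of_mem _ hm⟩, hfin.image _, ?_⟩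
  set W := (additivePolynomialHom p a d).ker
  have hW : (W : Set K) = {x | A.eval x = 0} := rfl
  have hWfin : (W : Set K).Finite := hW ▸ finite_setOf_eval_eq hA 0
  have : Finite W := hWfin.to_subtype
  have hcard : Nat.card W ≤ p ^ d := by
    rw [show Nat.card W = (W : Set K).ncard from Nat.card_coe_set_eq _, hW]
    exact (ncard_setOf_eval_eq_le hA 0).trans (natDegree_additivePolynomial_le p a d hp.ne_zero)
  calc _ ≤ (vf.v '' ((W : Set K) \ {0})).ncard + 1 :=
        vf.ncard_image_v_le_of_sub_mem hfin hWfin fun m hm m' hm' => by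
          change additivePolynomialHom p a d (m - m') = 0
          rw [map_sub]
          exact sub_eq_zero.2 (hm.trans hm'.symm)
    _ ≤ d + 1 := by grw [vf.ncard_image_v_le_of_natCard_le hp W hcard]
    _ ≤ 2 ^ d := Nat.lt_two_pow_self

/-- Let `(K, v)` be a separably closed valued field of characteristic
`p > 0`, `d ≥ 1`, and `a_0, …, a_d ∈ K` with `a_0 ≠ 0` and `a_d ≠ 0`. Then for every
`n ≠ 0` the set `S = {v m : ∑ a_i·m^{p^i} = n}` is nonempty and has at most `2^d`
elements. -/
theorem stmt_12 (p : ℕ) (hp : p.Prime) (K : Type*) [Field K] [CharP K p] [IsSepClosed K]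
    (Γ : Type*) [AddCommGroup Γ] [LinearOrder Γ] [IsOrderedAddMonoid Γ] (vf : ValuedFieldAux K Γ)
    (d : ℕ) (hd : 1 ≤ d) (a : ℕ → K) (ha0 : a 0 ≠ 0) (had : a d ≠ 0)
    (n : K) (hn : n ≠ 0) :
    (vf.v '' {m : K | ∑ i ∈ Finset.range (d + 1), a i * m ^ (p ^ i) = n}).Nonempty ∧
    (vf.v '' {m : K | ∑ i ∈ Finset.range (d + 1), a i * m ^ (p ^ i) = n}).Finite ∧
    (vf.v '' {m : K | ∑ i ∈ Finset.range (d + 1), a i * m ^ (p ^ i) = n}).ncard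
      ≤ 2 ^ d :=
  stmt_12_general p hp K Γ vf d a ha0 n
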